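/- The equational theory T0 with three binary function symbols l, r, m and the single axiom l(x1,x2) = r(x2,x1) is rigid: for every linear-regular term t(x1,...,xn) over {l,r,m} and every permutation σ of {1,...,n}, if T0 proves t(x1,...,xn) = t(x_{σ(1)},...,x_{σ(n)}), then σ is the identity permutation. -/

import Mathlib

/-- Terms of the theory `T0` with three binary symbols `l`, `r`, `m`,
in context `x_1, ..., x_n`. -/
inductive Tm0 : ℕ → Type
  | var {n} : Fin n → Tm0 n
  | l {n} : Tm0 n → Tm0 n → Tm0 n
  | r {n} : Tm0 n → Tm0 n → Tm0 n
  | m {n} : Tm0 n → Tm0 n → Tm0 n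

/-- Equational provability in `T0`, whose single axiom is `l(x1,x2) = r(x2,x1)`
(closed under all substitution instances and congruence). -/
inductive Prov0 : {n : ℕ} → Tm0 n → Tm0 n → Prop
  | refl {n} (t : Tm0 n) : Prov0 t t
  | symm {n} {s t : Tm0 n} : Prov0 s t → Prov0 t s
  | trans {n} {s t w : Tm0 n} : Prov0 s t → Prov0 t w → Prov0 s w
  | congl {n} {a a' b b' : Tm0 n} : Prov0 a a' → Prov0 b b' → Prov0 (.l a b) (.l a' b')
  | congr_ {n} {a a' b b' : Tm0 n} : Prov0 a a' → Prov0 b b' → Prov0 (.r a b) (.r a' b')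
  | congm {n} {a a' b b' : Tm0 n} : Prov0 a a' → Prov0 b b' → Prov0 (.m a b) (.m a' b')
  | ax {n} (a b : Tm0 n) : Prov0 (.l a b) (.r b a)

/-- The left-to-right list of variable occurrences of a term of `T0`. -/
def varList0 {n} : Tm0 n → List (Fin n)
  | .var i => [i]
  | .l a b => varList0 a ++ varList0 b
  | .r a b => varList0 a ++ varList0 b
  | .m a b => varList0 a ++ varList0 b

/-- A term in context `x_1, ..., x_n` is linear-regular if every variable occurs exactly once. -/
def LinReg0 {n} (t : Tm0 n) : Prop := ∀ i : Fin n, (varList0 t).count i = 1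

/-- Substitution of variables along a map of variables (`t(x_{σ(1)},...,x_{σ(n)})`). -/
def rename0 {n} (σ : Fin n → Fin n) : Tm0 n → Tm0 n
  | .var i => .var (σ i)
  | .l a b => .l (rename0 σ a) (rename0 σ b)
  | .r a b => .r (rename0 σ a) (rename0 σ b)
  | .m a b => .m (rename0 σ a) (rename0 σ b)

/-!
Orienting the axiom as `r(a,b) ↦ l(b,a)` gives a normal form that is invariant under
provability and commutes with renaming. So if `t = t σ` is provable, the normal form of `t`
is fixed by renaming along `σ`, hence `σ` fixes every variable occurring in it; these are
the variables of `t`, i.e. all of them.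
-/

def normL {n} : Tm0 n → Tm0 n
  | .var i => .var i
  | .l a b => .l (normL a) (normL b)
  | .r a b => .l (normL b) (normL a)
  | .m a b => .m (normL a) (normL b)

theorem Prov0.normL_eq {n} {s t : Tm0 n} (h : Prov0 s t) : normL s = normL t := by
  induction h with
  | refl => rfl
  | symm _ ih => exact ih.symm
  | trans _ _ ih₁ ih₂ => exact ih₁.trans ih₂
  | congl _ _ ih₁ ih₂ | congr_ _ _ ih₁ ih₂ | congm _ _ ih₁ ih₂ => simp only [normL, ih₁, ih₂]
  | ax => rfl

theorem normL_rename0 {n} (σ : Fin n → Fin n) (t : Tm0 n) :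
    normL (rename0 σ t) = rename0 σ (normL t) := by
  induction t with
  | var => rfl
  | l _ _ iha ihb | r _ _ iha ihb | m _ _ iha ihb => simp only [normL, rename0, iha, ihb]

theorem varList0_rename0 {n} (σ : Fin n → Fin n) (t : Tm0 n) :
    varList0 (rename0 σ t) = (varList0 t).map σ := by
  induction t with
  | var => rfl
  | l _ _ iha ihb | r _ _ iha ihb | m _ _ iha ihb =>
    simp only [varList0, rename0, iha, ihb, List.map_append]

theorem varList0_normL_perm {n} (t : Tm0 n) : (varList0 (normL t)).Perm (varList0 t) := by
  induction t with
  | var => rfl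
  | l _ _ iha ihb | m _ _ iha ihb => exact iha.append ihb
  | r _ _ iha ihb => exact (ihb.append iha).trans List.perm_append_comm

theorem T0_rigid :
    ∀ (n : ℕ) (t : Tm0 n), LinReg0 t → ∀ σ : Equiv.Perm (Fin n),
      Prov0 t (rename0 σ t) → σ = 1 := by
  intro n t hlin σ h
  have hfix : rename0 σ (normL t) = normL t := (normL_rename0 σ t).symm.trans h.normL_eq.symm
  have hmap : (varList0 (normL t)).map σ = (varList0 (normL t)).map id := by
    rw [← varList0_rename0, hfix, List.map_id]
  refine Equiv.ext fun i => List.map_eq_map_iff.1 hmap i ?_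
  have hocc : 0 < (varList0 t).count i := by rw [hlin i]; exact Nat.one_pos
  exact (varList0_normL_perm t).mem_iff.2 (List.count_pos_iff.1 hocc)
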